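/- Interpolation step: Let F be a field, A = ((x_0,y_0),…,(x_{n−1},y_{n−1})) a list of n points of F×F, M_x, M_y ∈ F[X,Y]^{r×r} matrices of polynomials, and for each i ∈ {0,…,w−1} and each point (x,y) of A let H_{i,(x,y)} ∈ F^{r×s} be a matrix and c_{(x,y)} ∈ F^s a vector. Let d1 ≥ t and d2 ≥ k be integers with w(d1−t+1)(d2−k+1) > nr. Then there exist polynomials Q_0,…,Q_{w−1} ∈ F[X,Y], not all zero, with deg_X Q_i ≤ d1−t and deg_Y Q_i ≤ d2−k for all i, such that for every point (x,y) of A: Σ_{i=0}^{w−1} (Q_i(M_x,M_y) evaluated entrywise at (x,y)) · H_{i,(x,y)} · c_{(x,y)} = 0 in F^r. -/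

import Mathlib

/-!
The constraints are `F`-linear in the tuple `(Q_0, …, Q_{w-1})`, because substituting matrices
into a polynomial is linear in its coefficients. On tuples of polynomials supported in the box
`X^a Y^b` with `a ≤ d1 - t`, `b ≤ d2 - k` the domain has dimension `w (d1 - t + 1) (d2 - k + 1)`,
which exceeds the number `n r` of scalar constraints, so the constraint map has a nonzero kernel.
-/

open MvPolynomial

noncomputable section

/-- `q(Mx, My)`: the matrix obtained from `q ∈ F[X,Y]` by substituting each
monomial `X^a Y^b` (with its coefficient) by `Mx^a · My^b`. -/
def matSubst (F : Type) [Field F] {r : ℕ} (q : MvPolynomial (Fin 2) F)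
    (Mx My : Matrix (Fin r) (Fin r) (MvPolynomial (Fin 2) F)) :
    Matrix (Fin r) (Fin r) (MvPolynomial (Fin 2) F) :=
  ∑ m ∈ q.support, MvPolynomial.coeff m q • (Mx ^ (m 0) * My ^ (m 1))

open Module Finset

theorem Submodule.exists_ne_zero_forall_mem_and_map_eq_zero {K M V ι : Type*} [Field K]
    [AddCommGroup M] [Module K M] [AddCommGroup V] [Module K V] [Fintype ι]
    (P : Submodule K M) [FiniteDimensional K P] [FiniteDimensional K V]
    (Φ : (ι → M) →ₗ[K] V) (h : finrank K V < Fintype.card ι * finrank K P) :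
    ∃ Q : ι → M, Q ≠ 0 ∧ (∀ i, Q i ∈ P) ∧ Φ Q = 0 := by
  have hdim : finrank K V < finrank K (ι → P) := by
    simpa [Module.finrank_pi_fintype] using h
  obtain ⟨x, hx, hx0⟩ := Submodule.ne_bot_iff _ |>.mp <|
    LinearMap.ker_ne_bot_of_finrank_lt (f := Φ ∘ₗ LinearMap.piMap fun _ => P.subtype) hdim
  exact ⟨fun i => x i, fun h0 => hx0 (funext fun i => Subtype.ext (congrFun h0 i)),
    fun i => (x i).2, hx⟩

theorem Finsupp.card_Iic_eq_prod {ι : Type*} [Fintype ι] [DecidableEq ι] (f : ι →₀ ℕ) :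
    #(Iic f) = ∏ i, (f i + 1) := by
  rw [Finsupp.card_Iic]
  refine (Finset.prod_congr rfl fun i _ => Nat.card_Iic _).trans
    (Finset.prod_subset (subset_univ _) fun i _ hi => ?_)
  simp [Finsupp.notMem_support_iff.1 hi]

namespace MvPolynomial

variable {R σ : Type*} [CommRing R]

instance (s : Finset (σ →₀ ℕ)) : Module.Finite R (restrictSupport R (s : Set (σ →₀ ℕ))) :=
  .of_basis (basisRestrictSupport R _)

theorem finrank_restrictSupport_finset [Nontrivial R] (s : Finset (σ →₀ ℕ)) :
    finrank R (restrictSupport R (s : Set (σ →₀ ℕ))) = #s := by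
  simp [finrank_eq_card_basis (basisRestrictSupport R _)]

theorem degreeOf_le_of_mem_restrictSupport_Iic [DecidableEq σ] {f : σ →₀ ℕ}
    {p : MvPolynomial σ R} (hp : p ∈ restrictSupport R (Iic f : Set (σ →₀ ℕ))) (i : σ) :
    degreeOf i p ≤ f i :=
  degreeOf_le_iff.2 fun _ hm => (mem_Iic.1 (hp hm) :) i

end MvPolynomial

section Interpolation

variable {F : Type} [Field F] {n r s w : ℕ}

def matSubstLinearMap (Mx My : Matrix (Fin r) (Fin r) (MvPolynomial (Fin 2) F)) :
    MvPolynomial (Fin 2) F →ₗ[F] Matrix (Fin r) (Fin r) (MvPolynomial (Fin 2) F) :=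
  Finsupp.linearCombination F (fun m : Fin 2 →₀ ℕ => Mx ^ m 0 * My ^ m 1) ∘ₗ
    (AddMonoidAlgebra.coeffLinearEquiv F).toLinearMap

theorem matSubstLinearMap_apply (Mx My : Matrix (Fin r) (Fin r) (MvPolynomial (Fin 2) F))
    (q : MvPolynomial (Fin 2) F) : matSubstLinearMap Mx My q = matSubst F q Mx My :=
  rfl

def interpolationConstraints (A : Fin n → F × F)
    (Mx My : Matrix (Fin r) (Fin r) (MvPolynomial (Fin 2) F))
    (H : Fin w → Fin n → Matrix (Fin r) (Fin s) F) (c : Fin n → Fin s → F) :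
    (Fin w → MvPolynomial (Fin 2) F) →ₗ[F] Fin n → Fin r → F where
  toFun Q m := ∑ i : Fin w,
    (((matSubst F (Q i) Mx My).map (eval ![(A m).1, (A m).2])) * H i m).mulVec (c m)
  map_add' P Q := by
    ext m : 1
    simp only [Pi.add_apply, ← matSubstLinearMap_apply, map_add, Matrix.map_add _ (map_add _),
      Matrix.add_mul, Matrix.add_mulVec, Finset.sum_add_distrib]
  map_smul' a Q := by
    ext m : 1
    simp only [Pi.smul_apply, ← matSubstLinearMap_apply, map_smul,
      Matrix.map_smul _ a fun p => smul_eval _ p a, Matrix.smul_mul, Matrix.smul_mulVec,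
      Finset.smul_sum, RingHom.id_apply]

end Interpolation

theorem interpolation_step_general
    {F : Type} [Field F] {n r s w t k d1 d2 : ℕ}
    (A : Fin n → F × F)
    (Mx My : Matrix (Fin r) (Fin r) (MvPolynomial (Fin 2) F))
    (H : Fin w → Fin n → Matrix (Fin r) (Fin s) F)
    (c : Fin n → Fin s → F)
    (hcount : n * r < w * (d1 - t + 1) * (d2 - k + 1)) :
    ∃ Q : Fin w → MvPolynomial (Fin 2) F,
      Q ≠ 0 ∧
      (∀ i : Fin w, (Q i).degreeOf 0 ≤ d1 - t ∧ (Q i).degreeOf 1 ≤ d2 - k) ∧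
      ∀ m : Fin n,
        (∑ i : Fin w,
          (((matSubst F (Q i) Mx My).map (eval ![(A m).1, (A m).2])) * H i m).mulVec
            (c m)) = 0 := by
  let box : Fin 2 →₀ ℕ := Finsupp.single 0 (d1 - t) + Finsupp.single 1 (d2 - k)
  have hdim : finrank F (Fin n → Fin r → F) <
      Fintype.card (Fin w) * finrank F (restrictSupport F (Iic box : Set (Fin 2 →₀ ℕ))) := by
    simpa [Module.finrank_pi_fintype, finrank_restrictSupport_finset, Finsupp.card_Iic_eq_prod,
      box, mul_assoc] using hcount
  obtain ⟨Q, hQ0, hQbox, hQ⟩ := Submodule.exists_ne_zero_forall_mem_and_map_eq_zero _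
    (interpolationConstraints A Mx My H c) hdim
  refine ⟨Q, hQ0, fun i => ⟨?_, ?_⟩, congrFun hQ⟩
  · simpa [box] using degreeOf_le_of_mem_restrictSupport_Iic (hQbox i) 0
  · simpa [box] using degreeOf_le_of_mem_restrictSupport_Iic (hQbox i) 1

/-- Interpolation step: there exist polynomials `Q_0,…,Q_{w-1}`, not all zero, with
`deg_X Q_i ≤ d1 - t`, `deg_Y Q_i ≤ d2 - k`, satisfying the `r` homogeneous linear
constraints at each of the `n` evaluation points. -/
theorem interpolation_step
    {F : Type} [Field F] {n r s w t k d1 d2 : ℕ}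
    (A : Fin n → F × F)
    (Mx My : Matrix (Fin r) (Fin r) (MvPolynomial (Fin 2) F))
    (H : Fin w → Fin n → Matrix (Fin r) (Fin s) F)
    (c : Fin n → Fin s → F)
    (hd1 : t ≤ d1) (hd2 : k ≤ d2)
    (hcount : n * r < w * (d1 - t + 1) * (d2 - k + 1)) :
    ∃ Q : Fin w → MvPolynomial (Fin 2) F,
      Q ≠ 0 ∧
      (∀ i : Fin w, (Q i).degreeOf 0 ≤ d1 - t ∧ (Q i).degreeOf 1 ≤ d2 - k) ∧
      ∀ m : Fin n,
        (∑ i : Fin w,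
          (((matSubst F (Q i) Mx My).map (eval ![(A m).1, (A m).2])) * H i m).mulVec
            (c m)) = 0 :=
  interpolation_step_general A Mx My H c hcount

end
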